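/- Every ω-precompact, sequentially h-complete Hausdorff topological group G densely embeds into the projective limit of its metrizable quotient groups G/N (taken over closed normal subgroups N with G/N metrizable). -/

import Mathlib

/-!
A countable family of neighbourhoods of `1` extends to a countable group filter basis `F`, since
ω-precompactness lets countably many neighbourhoods control all conjugations. Its intersection is a
closed normal subgroup `N` such that `G ⧸ N` is ω-precompact, sequentially h-complete and has `{1}`
as a Gδ; so has `G ⧸ K` for a countable intersection `K` of kernels of metrizable quotients.

Such a group is metrizable. If `{1} = ⋂ Oₙ`, a basis `F₀` containing the `Oₙ` defines a coarser,
Hausdorff, first countable group topology, sequentially complete by h-completeness and hence Baire.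
For a neighbourhood `U`, a basis `F ⊇ F₀ ∪ {U}` gives a topology between the two, and the open
mapping theorem (a continuous surjective homomorphism from an ω-precompact, sequentially complete,
first countable group onto a Baire group is open) applied to the identity shows that `U` is already
an `F₀`-neighbourhood.

Hence the metrizable quotients have arbitrarily small kernels, which makes the canonical map an
embedding, and they are closed under finite intersections, which makes its image dense among the
compatible threads.
-/

open Topology Pointwise

universe u

section Defs
variable (G : Type u) [Group G] [TopologicalSpace G] [IsTopologicalGroup G]

/-- Sequential completeness w.r.t. the canonical group uniformity. -/
def SeqComplete : Prop :=
  letI := IsTopologicalGroup.rightUniformSpace G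
  ∀ u : ℕ → G, CauchySeq u → ∃ x, Filter.Tendsto u Filter.atTop (𝓝 x)

/-- `G` is sequentially h-complete: every continuous homomorphic image is
sequentially complete. -/
def SeqHComplete : Prop :=
  ∀ (H : Type u) [Group H] [TopologicalSpace H] [IsTopologicalGroup H] [T2Space H]
    (f : G →* H), Continuous f → Function.Surjective f → SeqComplete H

/-- `G` is ω-precompact. -/
def OmegaPrecompact : Prop :=
  ∀ U ∈ 𝓝 (1 : G), ∃ F : Set G, F.Countable ∧ U * F = Set.univ

/-- `G` has countable pseudocharacter. -/
def CountablePseudocharacter : Prop :=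
  ∃ s : ℕ → Set G, (∀ n, IsOpen (s n)) ∧ (⋂ n, s n) = ({1} : Set G)

/-- `G` is precompact. -/
def GroupPrecompact : Prop :=
  ∀ U ∈ 𝓝 (1 : G), ∃ F : Set G, F.Finite ∧ U * F = Set.univ

/-- `G` is h-complete: every continuous homomorphic image is complete. -/
def HComplete : Prop :=
  ∀ (H : Type u) [Group H] [TopologicalSpace H] [IsTopologicalGroup H] [T2Space H]
    (f : G →* H), Continuous f → Function.Surjective f →
      letI := IsTopologicalGroup.rightUniformSpace H
      CompleteSpace H

/-- `G` is maximally almost periodic. -/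
def MAP : Prop :=
  ∃ (K : Type u) (_ : Group K) (_ : TopologicalSpace K),
    ∃ (_ : IsTopologicalGroup K) (_ : T2Space K) (_ : CompactSpace K),
      ∃ f : G →* K, Continuous f ∧ Function.Injective f

/-- `G` is minimally almost periodic. -/
def MinAP : Prop :=
  ∀ (K : Type u) [Group K] [TopologicalSpace K] [IsTopologicalGroup K] [T2Space K]
    [CompactSpace K] (f : G →* K), Continuous f → ∀ g : G, f g = 1

/-- `G` is c-compact. -/
def CCompact : Prop :=
  ∀ (H : Type u) [Group H] [TopologicalSpace H] [IsTopologicalGroup H] [T2Space H]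
    (S : Subgroup (G × H)), IsClosed (S : Set (G × H)) →
      IsClosed ((S.map (MonoidHom.snd G H) : Subgroup H) : Set H)

/-- `G` is totally minimal. -/
def TotallyMinimal : Prop :=
  ∀ (H : Type u) [Group H] [TopologicalSpace H] [IsTopologicalGroup H] [T2Space H]
    (f : G →* H), Continuous f → Function.Surjective f → IsOpenMap f

/-- `G` is minimal. -/
def MinimalGroup : Prop :=
  ∀ (H : Type u) [Group H] [TopologicalSpace H] [IsTopologicalGroup H] [T2Space H]
    (f : G →* H), Continuous f → Function.Bijective f → IsOpenMap f

end Defs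

/-- `X` has a countable network. -/
def HasCountableNetwork (X : Type u) [TopologicalSpace X] : Prop :=
  ∃ N : Set (Set X), N.Countable ∧ ∀ U : Set X, IsOpen U → ∃ S ⊆ N, ⋃₀ S = U

/-- The index of metrizable quotients of `G`: closed normal subgroups `N`
with `G ⧸ N` metrizable. -/
def MetQuotIdx (G : Type u) [Group G] [TopologicalSpace G] [IsTopologicalGroup G] :=
  {N : Subgroup G // N.Normal ∧ IsClosed (N : Set G) ∧
    TopologicalSpace.MetrizableSpace (G ⧸ N)}

/-- The canonical map from `G` into the product of its metrizable quotients. -/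
def canonMap (G : Type u) [Group G] [TopologicalSpace G] [IsTopologicalGroup G] :
    G → ∀ N : MetQuotIdx G, G ⧸ N.val := fun g _ => QuotientGroup.mk g

/-- The projective limit of the metrizable quotients of `G`, realized as the
set of compatible threads in the product. -/
def projLimit (G : Type u) [Group G] [TopologicalSpace G] [IsTopologicalGroup G] :
    Set (∀ N : MetQuotIdx G, G ⧸ N.val) :=
  {x | ∀ (N M : MetQuotIdx G) (h : N.val ≤ M.val),
    haveI := N.prop.1
    haveI := M.prop.1
    QuotientGroup.map N.val M.val (MonoidHom.id G) (fun _ ha => h ha) (x N) = x M}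

open Filter Set Function TopologicalSpace

section Images

variable {G H : Type u} [Group G] [TopologicalSpace G] [Group H] [TopologicalSpace H]

theorem OmegaPrecompact.map (hω : OmegaPrecompact G) (f : G →* H) (hf : Continuous f)
    (hsurj : Surjective f) : OmegaPrecompact H := by
  intro U hU
  obtain ⟨F, hFc, hFU⟩ := hω _ (hf.continuousAt.preimage_mem_nhds (by rwa [map_one]))
  refine ⟨f '' F, hFc.image f, eq_univ_of_forall fun y => ?_⟩
  obtain ⟨x, rfl⟩ := hsurj y
  obtain ⟨u, hu, c, hc, rfl⟩ : x ∈ f ⁻¹' U * F := hFU ▸ mem_univ x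
  exact ⟨f u, hu, f c, mem_image_of_mem f hc, (map_mul f u c).symm⟩

theorem SeqHComplete.map (hs : SeqHComplete G) (f : G →* H) (hf : Continuous f)
    (hsurj : Surjective f) : SeqHComplete H :=
  fun K _ _ _ _ g hg hgs => hs K (g.comp f) (hg.comp hf) (hgs.comp hsurj)

theorem OmegaPrecompact.exists_countable_conj_subset [IsTopologicalGroup G]
    (hω : OmegaPrecompact G) {U : Set G} (hU : U ∈ 𝓝 (1 : G)) :
    ∃ C : Set (Set G), C.Countable ∧ (∀ W ∈ C, W ∈ 𝓝 (1 : G)) ∧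
      ∀ x : G, ∃ W ∈ C, ∀ w ∈ W, x * w * x⁻¹ ∈ U := by
  have hconj : Tendsto (fun p : G × G => p.1 * p.2 * p.1⁻¹) (𝓝 1 ×ˢ 𝓝 1) (𝓝 1) := by
    simpa [nhds_prod_eq] using (show Continuous fun p : G × G => p.1 * p.2 * p.1⁻¹ by
      fun_prop).tendsto (1, 1)
  obtain ⟨S, hS, hSU⟩ := mem_prod_self_iff.1 (hconj hU)
  obtain ⟨F, hFc, hSF⟩ := hω S hS
  have hconjS : ∀ c : G, (fun w => c * w * c⁻¹) ⁻¹' S ∈ 𝓝 (1 : G) := fun c =>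
    (continuous_mul_const _).comp (continuous_const_mul c) |>.continuousAt.preimage_mem_nhds
      (by simpa using hS)
  refine ⟨(fun c => (fun w => c * w * c⁻¹) ⁻¹' S) '' F, hFc.image _,
    forall_mem_image.2 fun c _ => hconjS c, fun x => ?_⟩
  obtain ⟨s, hs, c, hc, rfl⟩ : x ∈ S * F := hSF ▸ mem_univ x
  refine ⟨_, mem_image_of_mem _ hc, fun w hw => ?_⟩
  have hxw : s * c * w * (s * c)⁻¹ = s * (c * w * c⁻¹) * s⁻¹ := by group
  exact hxw ▸ hSU (mk_mem_prod hs hw)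

end Images

theorem Set.Countable.exists_superset_closed {α : Type*} {S : Set α} (hS : S.Countable)
    (f : α → Set α) (hf : ∀ a, (f a).Countable) (g : α → α → α) :
    ∃ T, S ⊆ T ∧ T.Countable ∧ (∀ a ∈ T, f a ⊆ T) ∧ ∀ a ∈ T, ∀ b ∈ T, g a b ∈ T := by
  let step : Set α → Set α := fun A => (A ∪ ⋃ a ∈ A, f a) ∪ Set.image2 g A A
  let T : ℕ → Set α := fun n => step^[n] S
  have hT : ∀ n, T (n + 1) = step (T n) := fun n => iterate_succ_apply' step n S
  have hmono : Monotone T := monotone_nat_of_le_succ fun n => by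
    rw [hT]; exact subset_union_left.trans subset_union_left
  refine ⟨⋃ n, T n, subset_iUnion T 0, countable_iUnion fun n => ?_, ?_, ?_⟩
  · induction n with
    | zero => exact hS
    | succ n ih =>
      rw [hT]
      exact (ih.union (ih.biUnion fun a _ => hf a)).union (Set.Countable.image2 ih ih g)
  · intro a ha
    obtain ⟨n, hn⟩ := mem_iUnion.1 ha
    refine subset_trans ?_ (subset_iUnion T (n + 1))
    rw [hT]
    exact (subset_biUnion_of_mem hn).trans (subset_union_right.trans subset_union_left)
  · intro a ha b hb
    obtain ⟨m, hm⟩ := mem_iUnion.1 ha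
    obtain ⟨n, hn⟩ := mem_iUnion.1 hb
    refine mem_iUnion.2 ⟨max m n + 1, ?_⟩
    rw [hT]
    exact Or.inr (mem_image2_of_mem (hmono (le_max_left m n) hm) (hmono (le_max_right m n) hn))

section FilterBasis

variable {G : Type u} [Group G] [TopologicalSpace G] [IsTopologicalGroup G]

theorem OmegaPrecompact.exists_countable_refinements (hω : OmegaPrecompact G) {V : Set G}
    (hV : V ∈ 𝓝 (1 : G)) : ∃ C : Set (Set G), C.Countable ∧ (∀ W ∈ C, W ∈ 𝓝 (1 : G)) ∧
      V⁻¹ ∈ C ∧ (∃ W ∈ C, W * W ⊆ V) ∧ ∀ x : G, ∃ W ∈ C, ∀ w ∈ W, x * w * x⁻¹ ∈ V := by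
  obtain ⟨C, hCc, hC1, hCV⟩ := hω.exists_countable_conj_subset hV
  obtain ⟨W, hW, hWV⟩ := exists_nhds_one_split hV
  refine ⟨insert V⁻¹ (insert W C), (hCc.insert W).insert _, ?_, mem_insert _ _,
    ⟨W, mem_insert_of_mem _ (mem_insert _ _), mul_subset_iff.2 hWV⟩,
    fun x => (hCV x).imp fun W' hW' => ⟨mem_insert_of_mem _ (mem_insert_of_mem _ hW'.1), hW'.2⟩⟩
  rintro W' (rfl | rfl | hW')
  exacts [inv_mem_nhds_one G hV, hW, hC1 W' hW']

theorem OmegaPrecompact.exists_countable_groupFilterBasis (hω : OmegaPrecompact G)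
    {S : Set (Set G)} (hS : S.Countable) (hS1 : ∀ s ∈ S, s ∈ 𝓝 (1 : G)) :
    ∃ F : GroupFilterBasis G, F.sets.Countable ∧ (∀ V ∈ F, V ∈ 𝓝 (1 : G)) ∧ S ⊆ F.sets := by
  let Nhd := {V : Set G // V ∈ 𝓝 (1 : G)}
  choose C hCc hC1 hCinv hCmul hCconj using fun V : Nhd => hω.exists_countable_refinements V.2
  let S' : Set Nhd := insert ⟨univ, univ_mem⟩ {V | V.1 ∈ S}
  have hS' : S'.Countable := (hS.preimage Subtype.val_injective).insert _
  obtain ⟨T, hST, hTc, hTC, hTinter⟩ := hS'.exists_superset_closed (fun V => {W | W.1 ∈ C V})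
    (fun V => (hCc V).preimage Subtype.val_injective) fun V W => ⟨V.1 ∩ W.1, inter_mem V.2 W.2⟩
  have hchild : ∀ V ∈ T, ∀ W ∈ C V, W ∈ Subtype.val '' T := fun V hV W hW =>
    ⟨⟨W, hC1 V W hW⟩, hTC V hV hW, rfl⟩
  let F : GroupFilterBasis G :=
    { sets := Subtype.val '' T
      nonempty := ⟨univ, _, hST (mem_insert _ _), rfl⟩
      inter_sets := by
        rintro _ _ ⟨V, hV, rfl⟩ ⟨W, hW, rfl⟩
        exact ⟨V.1 ∩ W.1, ⟨_, hTinter V hV W hW, rfl⟩, subset_rfl⟩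
      one' := by
        rintro _ ⟨V, -, rfl⟩
        exact mem_of_mem_nhds V.2
      mul' := by
        rintro _ ⟨V, hV, rfl⟩
        obtain ⟨W, hW, hWV⟩ := hCmul V
        exact ⟨W, hchild V hV W hW, hWV⟩
      inv' := by
        rintro _ ⟨V, hV, rfl⟩
        exact ⟨V.1⁻¹, hchild V hV _ (hCinv V), fun x hx => hx⟩
      conj' := by
        rintro x _ ⟨V, hV, rfl⟩
        obtain ⟨W, hW, hWV⟩ := hCconj V x
        exact ⟨W, hchild V hV W hW, hWV⟩ }
  refine ⟨F, hTc.image _, ?_, fun s hs => ⟨⟨s, hS1 s hs⟩, hST (mem_insert_of_mem _ hs), rfl⟩⟩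
  rintro _ ⟨V, -, rfl⟩
  exact V.2

end FilterBasis

section FilterBasisTopology

variable {G : Type u} [Group G] (F : GroupFilterBasis G)

theorem GroupFilterBasis.le_topology [TopologicalSpace G] [IsTopologicalGroup G]
    (hF : ∀ V ∈ F, V ∈ 𝓝 (1 : G)) : ‹TopologicalSpace G› ≤ F.topology := by
  refine le_of_nhds_le_nhds fun x => ?_
  rw [F.nhds_eq, ← map_mul_left_nhds_one x]
  exact map_mono (F.toFilterBasis.hasBasis.ge_iff.2 hF)

theorem GroupFilterBasis.firstCountableTopology (hF : F.sets.Countable) :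
    @FirstCountableTopology G F.topology :=
  @FirstCountableTopology.mk G F.topology fun x =>
    (HasCountableBasis.mk (F.nhds_hasBasis x) hF).isCountablyGenerated

theorem GroupFilterBasis.t2Space (hF : ⋂₀ F.sets ⊆ {1}) : @T2Space G F.topology := by
  refine @IsTopologicalGroup.t2Space_of_one_sep G F.topology _ _ fun x hx => ?_
  obtain ⟨V, hV, hxV⟩ : ∃ V ∈ F.sets, x ∉ V := by
    by_contra! h
    exact hx (hF h)
  exact ⟨V, F.mem_nhds_one hV, hxV⟩

end FilterBasisTopology

theorem mul_inv_mem_of_forall_succ {G : Type*} [Group G] {V : ℕ → Set G}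
    (hV1 : ∀ n, (1 : G) ∈ V n) (hVmul : ∀ n, V (n + 1) * V (n + 1) ⊆ V n) {q : ℕ → G}
    (hq : ∀ n, q (n + 1) * (q n)⁻¹ ∈ V (n + 1)) (n d : ℕ) : q (n + d) * (q n)⁻¹ ∈ V n := by
  induction d generalizing n with
  | zero => simpa using hV1 n
  | succ d ih =>
    have htel : q (n + (d + 1)) * (q n)⁻¹ =
        q (n + 1 + d) * (q (n + 1))⁻¹ * (q (n + 1) * (q n)⁻¹) := by
      rw [show n + (d + 1) = n + 1 + d by omega]; group
    rw [htel]
    exact hVmul n (mul_mem_mul (ih (n + 1)) (hq n))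

theorem cauchySeq_of_mul_inv_mem {G : Type*} [Group G] [TopologicalSpace G]
    [IsTopologicalGroup G] {V : ℕ → Set G} (hV : (𝓝 (1 : G)).HasAntitoneBasis V) {q : ℕ → G}
    (hq : ∀ n d, q (n + d) * (q n)⁻¹ ∈ V n) :
    @CauchySeq G ℕ (IsTopologicalGroup.rightUniformSpace G) _ q := by
  let := IsTopologicalGroup.rightUniformSpace G
  rw [cauchySeq_iff]
  intro s hs
  obtain ⟨T, hT, hTs⟩ := mem_comap.1 hs
  obtain ⟨N, -, hN⟩ := hV.1.mem_iff.1 (inter_mem hT (inv_mem_nhds_one G hT))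
  have hmem : ∀ m ≥ N, ∀ d, q (m + d) * (q m)⁻¹ ∈ T ∩ T⁻¹ := fun m hm d =>
    hN (hV.2 hm (hq m d))
  refine ⟨N, fun k hk l hl => ?_⟩
  apply hTs
  show q l * (q k)⁻¹ ∈ T
  rcases le_total k l with hkl | hlk
  · obtain ⟨d, rfl⟩ := Nat.exists_eq_add_of_le hkl
    exact (hmem k hk d).1
  · obtain ⟨d, rfl⟩ := Nat.exists_eq_add_of_le hlk
    simpa using (hmem l hl d).2

section OpenMapping

variable {G H : Type u} [Group G] [TopologicalSpace G] [Group H] [TopologicalSpace H]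
  [IsTopologicalGroup H]

theorem MonoidHom.closure_image_mem_nhds_one [IsTopologicalGroup G] [BaireSpace H]
    (hω : OmegaPrecompact G) {f : G →* H} (hsurj : Surjective f) {W : Set G}
    (hW : W ∈ 𝓝 (1 : G)) : closure (f '' W) ∈ 𝓝 (1 : H) := by
  obtain ⟨V, hV, -, hVinv, hVW⟩ := exists_closed_nhds_one_inv_eq_mul_subset hW
  set A := closure (f '' V)
  obtain ⟨F, hFc, hVF⟩ := hω V hV
  have : Countable F := hFc.to_subtype
  obtain ⟨c, hc⟩ : ∃ c : F, (interior (Homeomorph.mulRight (f c) '' A)).Nonempty := by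
    refine nonempty_interior_of_iUnion_of_closed
      (fun c => (Homeomorph.mulRight (f c)).isClosedMap _ isClosed_closure)
      (iUnion_eq_univ_iff.2 fun z => ?_)
    obtain ⟨x, rfl⟩ := hsurj z
    obtain ⟨v, hv, c, hc, rfl⟩ : x ∈ V * F := hVF ▸ mem_univ x
    exact ⟨⟨c, hc⟩, f v, subset_closure (mem_image_of_mem f hv), (map_mul f v c).symm⟩
  obtain ⟨a, ha⟩ := (((Homeomorph.mulRight (f c)).image_interior A).symm ▸ hc).of_image
  have hinv : ∀ b ∈ A, b⁻¹ ∈ A := fun b hb =>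
    map_mem_closure continuous_inv hb (forall_mem_image.2 fun v hv =>
      ⟨v⁻¹, hVinv ▸ inv_mem_inv.2 hv, map_inv f v⟩)
  refine mem_of_superset ((isOpenMap_mul_right a⁻¹ _ isOpen_interior).mem_nhds
    ⟨a, ha, mul_inv_cancel a⟩) ?_
  rintro _ ⟨b, hb, rfl⟩
  refine closure_mono ?_ (map_mem_closure₂ continuous_mul (interior_subset hb)
    (hinv a (interior_subset ha)) fun _ h₁ _ h₂ => mul_mem_mul h₁ h₂)
  rw [← image_mul]
  exact image_mono hVW

theorem eq_one_of_forall_mem_closure_image [T1Space H] {f : G →* H} (hf : Continuous f)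
    {V : ℕ → Set G} (hV : (𝓝 (1 : G)).HasAntitoneBasis V) {z : H}
    (hz : ∀ n, z ∈ closure (f '' V n)) : z = 1 := by
  by_contra hne
  obtain ⟨O, hO, hOc, hOz⟩ := exists_mem_nhds_isClosed_subset
    (compl_singleton_mem_nhds (Ne.symm hne))
  obtain ⟨n, -, hn⟩ := hV.1.mem_iff.1 (hf.tendsto' 1 1 (map_one f) hO)
  exact hOz (closure_minimal (image_subset_iff.2 hn) hOc (hz n)) rfl

theorem MonoidHom.exists_seq_of_mem_closure_image [IsTopologicalGroup G] [BaireSpace H]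
    (hω : OmegaPrecompact G) {f : G →* H} (hsurj : Surjective f) {V : ℕ → Set G}
    (hV : ∀ n, V n ∈ 𝓝 (1 : G)) {x : H} (hx : x ∈ closure (f '' V 1)) :
    ∃ q : ℕ → G, q 0 = 1 ∧ (∀ n, q (n + 1) * (q n)⁻¹ ∈ V (n + 1)) ∧
      ∀ n, x * (f (q n))⁻¹ ∈ closure (f '' V (n + 1)) := by
  have hstep : ∀ (n : ℕ) (r : H), ∃ v : G, r ∈ closure (f '' V (n + 1)) →
      v ∈ V (n + 1) ∧ r * (f v)⁻¹ ∈ closure (f '' V (n + 2)) := by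
    intro n r
    by_cases hr : r ∈ closure (f '' V (n + 1))
    · obtain ⟨_, ⟨v, hv, rfl⟩, hvr⟩ := mem_closure_iff_nhds_one.1 hr _
        (inv_mem_nhds_one H (f.closure_image_mem_nhds_one hω hsurj (hV (n + 2))))
      refine ⟨v, fun _ => ⟨hv, ?_⟩⟩
      simpa [div_eq_mul_inv] using hvr
    · exact ⟨1, fun h => (hr h).elim⟩
  choose v hv using hstep
  let q : ℕ → G := fun n => Nat.rec 1 (fun n qn => v n (x * (f qn)⁻¹) * qn) n
  have hq : ∀ n, x * (f (q n))⁻¹ ∈ closure (f '' V (n + 1)) := by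
    intro n
    induction n with
    | zero => simpa [q] using hx
    | succ n ih =>
      have := (hv n _ ih).2
      simp only [q, map_mul, mul_inv_rev, ← mul_assoc] at this ⊢
      exact this
  refine ⟨q, rfl, fun n => ?_, hq⟩
  simpa [q] using (hv n _ (hq n)).1

theorem MonoidHom.closure_image_subset_image_mul [IsTopologicalGroup G] [T1Space H]
    [BaireSpace H] (hG : SeqComplete G) (hω : OmegaPrecompact G) {f : G →* H}
    (hf : Continuous f) (hsurj : Surjective f)
    {V : ℕ → Set G} (hV : (𝓝 (1 : G)).HasAntitoneBasis V)
    (hVmul : ∀ n, V (n + 1) * V (n + 1) ⊆ V n) : closure (f '' V 1) ⊆ f '' (V 0 * V 0) := by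
  intro x hx
  have hVnhds : ∀ n, V n ∈ 𝓝 (1 : G) := fun n => hV.1.mem_of_mem trivial
  obtain ⟨q, hq0, hqV, hxq⟩ := f.exists_seq_of_mem_closure_image hω hsurj hVnhds hx
  have hqV' := mul_inv_mem_of_forall_succ (fun n => mem_of_mem_nhds (hVnhds n)) hVmul hqV
  obtain ⟨y, hy⟩ := hG q (cauchySeq_of_mul_inv_mem hV hqV')
  have hxy : x * (f y)⁻¹ = 1 := by
    refine eq_one_of_forall_mem_closure_image hf hV fun k => ?_
    refine isClosed_closure.mem_of_tendsto (tendsto_const_nhds.mul ((hf.tendsto y).comp hy).inv)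
      ((eventually_ge_atTop k).mono fun n hn => ?_)
    exact closure_mono (image_mono (hV.2 (by omega : k ≤ n + 1))) (hxq n)
  have hy0 : y ∈ closure (V 0) :=
    mem_closure_of_tendsto hy (Eventually.of_forall fun n => by simpa [hq0] using hqV' 0 n)
  obtain ⟨z, hz, hzy⟩ := mem_closure_iff_nhds_one.1 hy0 _ (inv_mem_nhds_one G (hVnhds 0))
  refine ⟨y * z⁻¹ * z, mul_mem_mul ?_ hz, by rw [inv_mul_cancel_right, mul_inv_eq_one.1 hxy]⟩
  simpa [div_eq_mul_inv] using hzy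

theorem MonoidHom.image_mem_nhds_one_of_seqComplete [IsTopologicalGroup G]
    [FirstCountableTopology G] [T1Space H] [BaireSpace H] (hG : SeqComplete G)
    (hω : OmegaPrecompact G) {f : G →* H}
    (hf : Continuous f) (hsurj : Surjective f) {U : Set G} (hU : U ∈ 𝓝 (1 : G)) :
    f '' U ∈ 𝓝 (1 : H) := by
  obtain ⟨V, hV, hVmul⟩ := IsTopologicalGroup.exists_antitone_basis_nhds_one G
  obtain ⟨k, -, hk⟩ := hV.1.mem_iff.1 hU
  have hV' : (𝓝 (1 : G)).HasAntitoneBasis fun n => V (n + (k + 1)) :=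
    hV.comp_mono (monotone_id.add_const _) (tendsto_add_atTop_nat _)
  refine mem_of_superset
    (f.closure_image_mem_nhds_one hω hsurj (hV'.1.mem_of_mem (i := 1) trivial))
    ((f.closure_image_subset_image_mul hG hω hf hsurj hV' fun n => ?_).trans (image_mono ?_))
  · simpa [add_right_comm] using hVmul (n + (k + 1))
  · simpa using (hVmul k).trans hk

end OpenMapping

section Metrizable

variable {G : Type u} [Group G] [TopologicalSpace G] [IsTopologicalGroup G]

theorem SeqComplete.baireSpace [FirstCountableTopology G] (h : SeqComplete G) :
    BaireSpace G := by
  let := IsTopologicalGroup.rightUniformSpace G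
  have : (uniformity G).IsCountablyGenerated := comap.isCountablyGenerated _ _
  have : CompleteSpace G := UniformSpace.complete_of_cauchySeq_tendsto h
  let := UniformSpace.pseudoMetricSpace G
  exact BaireSpace.of_completelyPseudoMetrizable

theorem IsTopologicalGroup.metrizableSpace [T0Space G] [(𝓝 (1 : G)).IsCountablyGenerated] :
    MetrizableSpace G := by
  let := IsTopologicalGroup.rightUniformSpace G
  have : (uniformity G).IsCountablyGenerated := comap.isCountablyGenerated _ _
  exact UniformSpace.metrizableSpace

theorem SeqHComplete.seqComplete_topology (hs : SeqHComplete G) {F : GroupFilterBasis G}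
    (hF : ∀ V ∈ F, V ∈ 𝓝 (1 : G)) (hsep : ⋂₀ F.sets ⊆ {1}) : @SeqComplete G _ F.topology _ :=
  @hs G _ F.topology _ (F.t2Space hsep) (MonoidHom.id G) (continuous_id_of_le (F.le_topology hF))
    surjective_id

theorem OmegaPrecompact.metrizableSpace [T2Space G] (hω : OmegaPrecompact G)
    (hs : SeqHComplete G) (h1 : IsGδ ({1} : Set G)) : MetrizableSpace G := by
  obtain ⟨O, hOopen, hO⟩ := isGδ_iff_eq_iInter_nat.1 h1
  have hOnhds : ∀ n, O n ∈ 𝓝 (1 : G) := fun n =>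
    (hOopen n).mem_nhds (mem_iInter.1 (hO ▸ mem_singleton 1) n)
  have hsep : ∀ F : GroupFilterBasis G, range O ⊆ F.sets → ⋂₀ F.sets ⊆ {1} := fun F hOF =>
    (sInter_subset_sInter hOF).trans (by rw [sInter_range, hO])
  obtain ⟨F₀, hF₀c, hF₀1, hOF₀⟩ :=
    hω.exists_countable_groupFilterBasis (countable_range O) (forall_mem_range.2 hOnhds)
  have hF₀fc := F₀.firstCountableTopology hF₀c
  have hF₀sc := hs.seqComplete_topology hF₀1 (hsep F₀ hOF₀)
  have hnhds : @nhds G F₀.topology 1 ≤ 𝓝 1 := by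
    intro U hU
    obtain ⟨F, hFc, hF1, hSF⟩ := hω.exists_countable_groupFilterBasis
      (((hF₀c.union (countable_range O)).insert U))
      (by rintro s (rfl | hs | ⟨n, rfl⟩); exacts [hU, hF₀1 s hs, hOnhds n])
    have hle : F.topology ≤ F₀.topology := @GroupFilterBasis.le_topology G _ F₀ F.topology _
      fun V hV => F.mem_nhds_one (hSF (mem_insert_of_mem _ (mem_union_left _ hV)))
    have hsepF := hsep F ((subset_union_right.trans (subset_insert _ _)).trans hSF)
    -- the open mapping theorem for the identity `(G, F.topology) → (G, F₀.topology)`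
    simpa using @MonoidHom.image_mem_nhds_one_of_seqComplete G G _ F.topology _ F₀.topology _ _
      (F.firstCountableTopology hFc) (@T2Space.t1Space G F₀.topology (F₀.t2Space (hsep F₀ hOF₀)))
      (@SeqComplete.baireSpace G _ F₀.topology _ hF₀fc hF₀sc)
      (hs.seqComplete_topology hF1 hsepF)
      (@OmegaPrecompact.map G G _ _ _ F.topology hω (MonoidHom.id G)
        (continuous_id_of_le (F.le_topology hF1)) surjective_id)
      (MonoidHom.id G) (continuous_id_of_le hle) surjective_id U
      (F.mem_nhds_one (hSF (mem_insert U _)))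
  have : (𝓝 (1 : G)).IsCountablyGenerated := by
    rw [le_antisymm (nhds_mono (F₀.le_topology hF₀1)) hnhds]
    exact hF₀fc.nhds_generated_countable 1
  exact IsTopologicalGroup.metrizableSpace

end Metrizable

section Quotient

variable {G : Type u} [Group G]

def GroupFilterBasis.ker (F : GroupFilterBasis G) : Subgroup G where
  carrier := ⋂₀ F.sets
  one_mem' := mem_sInter.2 fun _ hV => F.one hV
  mul_mem' {a b} ha hb := mem_sInter.2 fun V hV => by
    obtain ⟨W, hW, hWV⟩ := F.mul hV
    exact hWV (mul_mem_mul (ha W hW) (hb W hW))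
  inv_mem' {a} ha := mem_sInter.2 fun V hV => by
    obtain ⟨W, hW, hWV⟩ := F.inv hV
    exact hWV (ha W hW)

instance GroupFilterBasis.ker_normal (F : GroupFilterBasis G) : F.ker.Normal :=
  ⟨fun n hn g => mem_sInter.2 fun V hV => by
    obtain ⟨W, hW, hWV⟩ := F.conj g hV
    exact hWV (hn W hW)⟩

instance Subgroup.normal_iInf {ι : Sort*} (N : ι → Subgroup G) [∀ i, (N i).Normal] :
    (⨅ i, N i).Normal :=
  Subgroup.normal_iInf_normal inferInstance

instance MetQuotIdx.normal [TopologicalSpace G] [IsTopologicalGroup G] (N : MetQuotIdx G) :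
    N.val.Normal :=
  N.prop.1

theorem QuotientGroup.isGδ_singleton_one_iInf [TopologicalSpace G] {ι : Type*} [Countable ι]
    (N : ι → Subgroup G) [∀ i, (N i).Normal] (h : ∀ i, IsGδ ({1} : Set (G ⧸ N i))) :
    IsGδ ({1} : Set (G ⧸ ⨅ i, N i)) := by
  let φ i := QuotientGroup.map _ (N i) (MonoidHom.id G) (iInf_le N i)
  have hφ : ∀ i, Continuous (φ i) := fun i =>
    (QuotientGroup.isQuotientMap_mk _).continuous_iff.2 QuotientGroup.continuous_mk
  have : ({1} : Set (G ⧸ ⨅ i, N i)) = ⋂ i, φ i ⁻¹' {1} := by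
    ext x
    induction x using QuotientGroup.induction_on with
    | H g =>
      simp only [mem_singleton_iff, mem_iInter, mem_preimage, QuotientGroup.eq_one_iff,
        Subgroup.mem_iInf]
      exact forall_congr' fun i => (QuotientGroup.eq_one_iff (N := N i) g).symm
  rw [this]
  exact IsGδ.iInter fun i => (h i).preimage (hφ i)

variable [TopologicalSpace G] [IsTopologicalGroup G]

theorem GroupFilterBasis.isClosed_ker (F : GroupFilterBasis G) (hF : ∀ V ∈ F, V ∈ 𝓝 (1 : G)) :
    IsClosed (F.ker : Set G) := by
  refine isClosed_of_closure_subset fun x hx => mem_sInter.2 fun V hV => ?_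
  obtain ⟨W, hW, hWV⟩ := F.mul hV
  obtain ⟨W', hW', hW'W⟩ := F.inv hW
  obtain ⟨y, hy, hyx⟩ := mem_closure_iff_nhds_one.1 hx W' (hF W' hW')
  have hxy : x * y⁻¹ ∈ W := by simpa [div_eq_mul_inv] using hW'W hyx
  simpa using hWV (mul_mem_mul hxy (hy W hW))

theorem GroupFilterBasis.isGδ_singleton_one_quotient_ker (F : GroupFilterBasis G)
    (hFc : F.sets.Countable) (hF : ∀ V ∈ F, V ∈ 𝓝 (1 : G)) :
    IsGδ ({1} : Set (G ⧸ F.ker)) := by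
  have : ({1} : Set (G ⧸ F.ker)) =
      ⋂ V ∈ F.sets, (QuotientGroup.mk : G → G ⧸ F.ker) '' interior V := by
    refine subset_antisymm (fun x hx => ?_) fun x hx => ?_
    · rw [mem_singleton_iff.1 hx]
      exact mem_iInter₂.2 fun V hV => ⟨1, mem_interior_iff_mem_nhds.2 (hF V hV), rfl⟩
    · obtain ⟨g, rfl⟩ := QuotientGroup.mk_surjective x
      refine (QuotientGroup.eq_one_iff g).2 (mem_sInter.2 fun V hV => ?_)
      obtain ⟨W, hW, hWV⟩ := F.mul hV
      obtain ⟨h, hh, hhg⟩ := mem_iInter₂.1 hx W hW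
      have hker : h⁻¹ * g ∈ F.ker := QuotientGroup.eq.1 hhg
      simpa using hWV (mul_mem_mul (interior_subset hh) (hker W hW))
  rw [this]
  exact IsGδ.biInter_of_isOpen hFc fun V _ => QuotientGroup.isOpenMap_coe _ isOpen_interior

theorem OmegaPrecompact.metrizableSpace_quotient (hω : OmegaPrecompact G) (hs : SeqHComplete G)
    (N : Subgroup G) [N.Normal] [IsClosed (N : Set G)] (h1 : IsGδ ({1} : Set (G ⧸ N))) :
    MetrizableSpace (G ⧸ N) :=
  (hω.map (QuotientGroup.mk' N) QuotientGroup.continuous_mk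
    (QuotientGroup.mk'_surjective N)).metrizableSpace
    (hs.map (QuotientGroup.mk' N) QuotientGroup.continuous_mk (QuotientGroup.mk'_surjective N)) h1

theorem OmegaPrecompact.exists_metQuotIdx_subset (hω : OmegaPrecompact G) (hs : SeqHComplete G)
    {U : Set G} (hU : U ∈ 𝓝 (1 : G)) : ∃ N : MetQuotIdx G, (N.val : Set G) ⊆ U := by
  obtain ⟨F, hFc, hF1, hUF⟩ :=
    hω.exists_countable_groupFilterBasis (countable_singleton U) (by simpa using hU)
  have := F.isClosed_ker hF1
  exact ⟨⟨F.ker, inferInstance, this,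
    hω.metrizableSpace_quotient hs _ (F.isGδ_singleton_one_quotient_ker hFc hF1)⟩,
    sInter_subset_of_mem (hUF rfl)⟩

theorem OmegaPrecompact.exists_metQuotIdx_le (hω : OmegaPrecompact G) (hs : SeqHComplete G)
    {ι : Type*} [Countable ι] (N : ι → MetQuotIdx G) :
    ∃ K : MetQuotIdx G, ∀ i, K.val ≤ (N i).val := by
  have hclosed : IsClosed ((⨅ i, (N i).val : Subgroup G) : Set G) := by
    rw [Subgroup.coe_iInf]
    exact isClosed_iInter fun i => (N i).prop.2.1
  have hGδ : ∀ i, IsGδ ({1} : Set (G ⧸ (N i).val)) := fun i => by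
    have := (N i).prop.2.2
    exact IsGδ.singleton 1
  exact ⟨⟨_, inferInstance, hclosed, hω.metrizableSpace_quotient hs _
    (QuotientGroup.isGδ_singleton_one_iInf _ hGδ)⟩, iInf_le _⟩

end Quotient

section CanonicalMap

variable {G : Type u} [Group G] [TopologicalSpace G] [IsTopologicalGroup G]

variable (G) in
def canonHom : G →* ∀ N : MetQuotIdx G, G ⧸ N.val :=
  MonoidHom.pi fun N => QuotientGroup.mk' N.val

theorem coe_canonHom : ⇑(canonHom G) = canonMap G := rfl

theorem continuous_canonMap : Continuous (canonMap G) :=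
  continuous_pi fun _ => QuotientGroup.continuous_mk

theorem range_canonMap_subset_projLimit : range (canonMap G) ⊆ projLimit G := by
  rintro _ ⟨g, rfl⟩ N M hNM
  rfl

theorem OmegaPrecompact.isEmbedding_canonMap [T0Space G] (hω : OmegaPrecompact G)
    (hs : SeqHComplete G) : IsEmbedding (canonMap G) := by
  refine IsInducing.isEmbedding ?_
  rw [← coe_canonHom, IsTopologicalGroup.isInducing_iff_nhds_one, coe_canonHom]
  refine le_antisymm (continuous_canonMap.tendsto' 1 1 rfl).le_comap fun U hU => ?_
  obtain ⟨V, hVopen, hV1, hVU⟩ := exists_open_nhds_one_mul_subset hU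
  obtain ⟨N, hN⟩ := hω.exists_metQuotIdx_subset hs (hVopen.mem_nhds hV1)
  refine mem_comap.2 ⟨(fun x => x N) ⁻¹' (QuotientGroup.mk '' V),
    (continuous_apply N).continuousAt.preimage_mem_nhds
      ((QuotientGroup.isOpenMap_coe V hVopen).mem_nhds ⟨1, hV1, rfl⟩), ?_⟩
  rintro g ⟨v, hv, hvg⟩
  have hvg : v⁻¹ * g ∈ N.val := QuotientGroup.eq.1 hvg
  simpa using hVU (mul_mem_mul hv (hN hvg))

theorem OmegaPrecompact.projLimit_subset_closure_range (hω : OmegaPrecompact G)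
    (hs : SeqHComplete G) : projLimit G ⊆ closure (range (canonMap G)) := by
  intro x hx
  refine mem_closure_iff.2 fun o ho hxo => ?_
  obtain ⟨I, u, hu, hIo⟩ := isOpen_pi_iff.1 ho x hxo
  obtain ⟨K, hK⟩ := hω.exists_metQuotIdx_le hs fun N : I => (N : MetQuotIdx G)
  obtain ⟨g, hg⟩ := QuotientGroup.mk_surjective (x K)
  refine ⟨canonMap G g, hIo fun N hN => ?_, g, rfl⟩
  have hgN : canonMap G g N = x N := by
    rw [← hx K N (hK ⟨N, hN⟩), ← hg]
    rfl
  exact hgN ▸ (hu N hN).2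

end CanonicalMap

/-- Every ω-precompact sequentially h-complete group densely embeds into the
projective limit of its metrizable quotients. -/
theorem stmt7 (G : Type u) [Group G] [TopologicalSpace G] [IsTopologicalGroup G] [T2Space G]
    (hω : OmegaPrecompact G) (hs : SeqHComplete G) :
    Topology.IsEmbedding (canonMap G) ∧ Set.range (canonMap G) ⊆ projLimit G ∧
      projLimit G ⊆ closure (Set.range (canonMap G)) :=
  ⟨hω.isEmbedding_canonMap hs, range_canonMap_subset_projLimit,
    hω.projLimit_subset_closure_range hs⟩
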